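/- arXiv:2502.21155 — 2 statements merged into one kernel-verified Lean document; each statement's English description precedes it below -/
import Mathlib

section
/- With the Voskresenskij–Klyachko data: for every k ≥ 1, positive integers a₁,…,a_k, and nonzero lattice points S₁,…,S_k ∈ C ∩ ℤ⁶ with Σᵢ aᵢ Sᵢ = v, one has Σᵢ aᵢ ≤ 2; moreover this bound is attained, since v = g₀ + h₀. In other words, 2 is the greatest total coefficient sum of a ℤ-nef-partition of v, i.e., the ℤ-total index of the Voskresenskij–Klyachko fourfold is τ_X(ℤ) = 2. -/
/-- The vectors `g₀,…,g₅`: `g₀ = (2,−1,−1,−1,−1,−1)` and `g_ℓ = g₀ − e_{ℓ+1}`. -/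
def vkG : Fin 6 → Fin 6 → ℤ :=
  ![![2, -1, -1, -1, -1, -1],
    ![2, -2, -1, -1, -1, -1],
    ![2, -1, -2, -1, -1, -1],
    ![2, -1, -1, -2, -1, -1],
    ![2, -1, -1, -1, -2, -1],
    ![2, -1, -1, -1, -1, -2]]

/-- The vectors `h₀,…,h₅`: `h₀ = (3,−2,−2,−2,−2,−2)` and `h_ℓ = h₀ + e_{ℓ+1}`. -/
def vkH : Fin 6 → Fin 6 → ℤ :=
  ![![3, -2, -2, -2, -2, -2],
    ![3, -1, -2, -2, -2, -2],
    ![3, -2, -1, -2, -2, -2],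
    ![3, -2, -2, -1, -2, -2],
    ![3, -2, -2, -2, -1, -2],
    ![3, -2, -2, -2, -2, -1]]

/-- The anticanonical class `v = −K_X = (5,−3,−3,−3,−3,−3)`. -/
def vkV : Fin 6 → ℤ := ![5, -3, -3, -3, -3, -3]

/-- Coercion `ℤ⁶ → ℚ⁶`. -/
def toQ (x : Fin 6 → ℤ) : Fin 6 → ℚ := fun i => (x i : ℚ)

/-- The 12 generators `g₀,…,g₅,h₀,…,h₅` of the nef cone. -/
def vkGen : Fin 12 → Fin 6 → ℤ := Fin.append vkG vkH

/-- The nef cone `C = {Σ_{g∈G} c_g g : c_g ∈ ℚ, c_g ≥ 0} ⊆ ℚ⁶`. -/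
def vkC : Set (Fin 6 → ℚ) :=
  {w | ∃ c : Fin 12 → ℚ, (∀ i, 0 ≤ c i) ∧ w = ∑ i, c i • toQ (vkGen i)}

/-- The 12 generators, as an explicit matrix of integers. -/
def vkGen' : Fin 12 → Fin 6 → ℤ :=
  ![![2, -1, -1, -1, -1, -1],
    ![2, -2, -1, -1, -1, -1],
    ![2, -1, -2, -1, -1, -1],
    ![2, -1, -1, -2, -1, -1],
    ![2, -1, -1, -1, -2, -1],
    ![2, -1, -1, -1, -1, -2],
    ![3, -2, -2, -2, -2, -2],
    ![3, -1, -2, -2, -2, -2],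
    ![3, -2, -1, -2, -2, -2],
    ![3, -2, -2, -1, -2, -2],
    ![3, -2, -2, -2, -1, -2],
    ![3, -2, -2, -2, -2, -1]]

lemma vkGen_eq : vkGen = vkGen' := by decide

/-- Any integer linear functional that is nonnegative on all 12 generators is
nonnegative on every lattice point of the nef cone. -/
lemma vk_comb (x : Fin 6 → ℤ) (hC : toQ x ∈ vkC) (w0 w1 w2 w3 w4 w5 : ℤ)
    (hw : ∀ i : Fin 12, 0 ≤ w0 * vkGen' i 0 + w1 * vkGen' i 1 + w2 * vkGen' i 2 +
      w3 * vkGen' i 3 + w4 * vkGen' i 4 + w5 * vkGen' i 5) :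
    0 ≤ w0 * x 0 + w1 * x 1 + w2 * x 2 + w3 * x 3 + w4 * x 4 + w5 * x 5 := by
  obtain ⟨c, hc, h⟩ := hC
  have e : ∀ j, (x j : ℚ) = ∑ i, c i * (vkGen' i j : ℚ) := by
    intro j
    have := congrFun h j
    rw [vkGen_eq] at this
    simpa [toQ, Finset.sum_apply] using this
  have key : (w0:ℚ) * x 0 + w1 * x 1 + w2 * x 2 + w3 * x 3 + w4 * x 4 + w5 * x 5 =
      ∑ i, c i * ((w0:ℚ) * vkGen' i 0 + w1 * vkGen' i 1 + w2 * vkGen' i 2 +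
        w3 * vkGen' i 3 + w4 * vkGen' i 4 + w5 * vkGen' i 5) := by
    simp_rw [e, Finset.mul_sum, ← Finset.sum_add_distrib]
    exact Finset.sum_congr rfl fun i _ => by ring
  have nn : (0:ℚ) ≤ ∑ i, c i * ((w0:ℚ) * vkGen' i 0 + w1 * vkGen' i 1 + w2 * vkGen' i 2 +
      w3 * vkGen' i 3 + w4 * vkGen' i 4 + w5 * vkGen' i 5) := by
    refine Finset.sum_nonneg fun i _ => mul_nonneg (hc i) ?_
    exact_mod_cast hw i
  rw [← key] at nn
  exact_mod_cast nn

lemma vk_aux2 (a : ℤ) (h1 : 0 ≤ a) (h2 : a < 2) : a = 0 ∨ a = 1 := by omega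

lemma vk_aux3 (a : ℤ) (h : 3 * a ≤ -1) : a ≤ -1 := by omega

/-- Every nonzero lattice point of the nef cone has first coordinate at least 2. -/
lemma vk_first (x : Fin 6 → ℤ) (hx : x ≠ 0) (hC : toQ x ∈ vkC) : 2 ≤ x 0 := by
  have H0 := vk_comb x hC 1 0 0 0 0 0 (by decide)
  have H1 := vk_comb x hC 1 1 0 0 0 0 (by decide)
  have H2 := vk_comb x hC 1 0 1 0 0 0 (by decide)
  have H3 := vk_comb x hC 1 0 0 1 0 0 (by decide)
  have H4 := vk_comb x hC 1 0 0 0 1 0 (by decide)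
  have H5 := vk_comb x hC 1 0 0 0 0 1 (by decide)
  have G1 := vk_comb x hC (-1) (-3) 0 0 0 0 (by decide)
  have G2 := vk_comb x hC (-1) 0 (-3) 0 0 0 (by decide)
  have G3 := vk_comb x hC (-1) 0 0 (-3) 0 0 (by decide)
  have G4 := vk_comb x hC (-1) 0 0 0 (-3) 0 (by decide)
  have G5 := vk_comb x hC (-1) 0 0 0 0 (-3) (by decide)
  have T := vk_comb x hC 10 3 3 3 3 3 (by decide)
  have hx0 : 0 ≤ x 0 := by linarith
  by_contra hlt
  push_neg at hlt
  rcases vk_aux2 (x 0) hx0 hlt with h0 | h1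
  · have hz1 : x 1 = 0 := by linarith
    have hz2 : x 2 = 0 := by linarith
    have hz3 : x 3 = 0 := by linarith
    have hz4 : x 4 = 0 := by linarith
    have hz5 : x 5 = 0 := by linarith
    exact hx (funext fun t => by fin_cases t <;> simp [h0, hz1, hz2, hz3, hz4, hz5])
  · have e1 : x 1 ≤ -1 := vk_aux3 _ (by linarith)
    have e2 : x 2 ≤ -1 := vk_aux3 _ (by linarith)
    have e3 : x 3 ≤ -1 := vk_aux3 _ (by linarith)
    have e4 : x 4 ≤ -1 := vk_aux3 _ (by linarith)
    have e5 : x 5 ≤ -1 := vk_aux3 _ (by linarith)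
    linarith

/-- Each generator lies in the nef cone. -/
lemma vk_gen_mem (i0 : Fin 12) : toQ (vkGen i0) ∈ vkC := by
  refine ⟨fun i => if i = i0 then 1 else 0, fun i => by positivity, ?_⟩
  rw [Finset.sum_eq_single i0]
  · simp
  · intro b _ hb; simp [hb]
  · simp

/-- The upper bound of the total index. -/
lemma vk_bound : ∀ k : ℕ, 1 ≤ k → ∀ (a : Fin k → ℤ) (S : Fin k → Fin 6 → ℤ),
    (∀ i, 0 < a i) → (∀ i, S i ≠ 0) → (∀ i, toQ (S i) ∈ vkC) →
    (∑ i, a i • S i) = vkV → (∑ i, a i) ≤ 2 := by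
  intro k _ a S ha hS hC hsum
  have h0 : ∑ i, a i * S i 0 = 5 := by
    have := congrFun hsum 0
    simpa [vkV, Finset.sum_apply] using this
  have hle : ∑ i, 2 * a i ≤ ∑ i, a i * S i 0 := by
    refine Finset.sum_le_sum fun i _ => ?_
    have h2 := vk_first (S i) (hS i) (hC i)
    have := ha i
    nlinarith
  rw [← Finset.mul_sum] at hle
  omega


/-- With the Voskresenskij–Klyachko data: for every `k ≥ 1`,
positive integers `a₁,…,a_k`, and nonzero lattice points `S₁,…,S_k ∈ C ∩ ℤ⁶`
with `Σ aᵢ Sᵢ = v`, one has `Σ aᵢ ≤ 2`; moreover this bound is attained, since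
`v = g₀ + h₀`. In other words, `2` is the greatest total coefficient sum of a
ℤ-nef-partition of `v`, i.e. `τ_X(ℤ) = 2`. -/
theorem vk_integral_total_index_eq_two :
    (∀ k : ℕ, 1 ≤ k → ∀ (a : Fin k → ℤ) (S : Fin k → Fin 6 → ℤ),
      (∀ i, 0 < a i) → (∀ i, S i ≠ 0) → (∀ i, toQ (S i) ∈ vkC) →
      (∑ i, a i • S i) = vkV → (∑ i, a i) ≤ 2) ∧
    vkV = vkG 0 + vkH 0 ∧
    IsGreatest {s : ℤ | ∃ k : ℕ, 1 ≤ k ∧ ∃ (a : Fin k → ℤ) (S : Fin k → Fin 6 → ℤ),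
      (∀ i, 0 < a i) ∧ (∀ i, S i ≠ 0) ∧ (∀ i, toQ (S i) ∈ vkC) ∧
      (∑ i, a i • S i) = vkV ∧ s = ∑ i, a i} 2 := by
  refine ⟨vk_bound, by decide, ⟨?_, ?_⟩⟩
  · refine ⟨2, by norm_num, ![1, 1], ![vkG 0, vkH 0], ?_, ?_, ?_, ?_, ?_⟩
    · intro i; fin_cases i <;> norm_num
    · intro i; fin_cases i <;> decide
    · intro i
      fin_cases i
      · have : vkG 0 = vkGen 0 := by decide
        rw [this]; exact vk_gen_mem 0
      · have : vkH 0 = vkGen 6 := by decide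
        rw [this]; exact vk_gen_mem 6
    · rw [Fin.sum_univ_two]; decide
    · rw [Fin.sum_univ_two]; decide
  · rintro s ⟨k, hk, a, S, ha, hS, hC, hsum, rfl⟩
    exact vk_bound k hk a S ha hS hC hsum
end

section
/- With the Voskresenskij–Klyachko data: the set of ordered pairs (x, y) of nonzero lattice points x, y ∈ C ∩ ℤ⁶ with x + y = v is exactly {(g_ℓ, h_ℓ) : ℓ = 0,…,5} ∪ {(h_ℓ, g_ℓ) : ℓ = 0,…,5}, which has 12 elements; in particular, there are exactly six ℤ-nef-partitions of v into two (unordered) parts, and no x ∈ ℤ⁶ satisfies x + x = v. -/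
lemma gen_mem (j : Fin 12) : toQ (vkGen j) ∈ vkC := by
  refine ⟨fun i => if i = j then 1 else 0, fun i => by by_cases h : i = j <;> simp [h], ?_⟩
  simp [ite_smul]

lemma mem_dot (f : Fin 6 → ℤ) (hf : ∀ j : Fin 12, 0 ≤ ∑ i, f i * vkGen j i)
    (x : Fin 6 → ℤ) (hx : toQ x ∈ vkC) : 0 ≤ ∑ i, f i * x i := by
  obtain ⟨c, hc, hw⟩ := hx
  have key : ∑ i, (f i : ℚ) * toQ x i
      = ∑ j, c j * ((∑ i, f i * vkGen j i : ℤ) : ℚ) := by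
    rw [hw]
    push_cast
    simp only [Finset.sum_apply, Pi.smul_apply, smul_eq_mul, Finset.mul_sum, toQ]
    rw [Finset.sum_comm]
    exact Finset.sum_congr rfl fun j _ => Finset.sum_congr rfl fun i _ => by push_cast; ring
  have h1 : (0:ℚ) ≤ ∑ i, (f i : ℚ) * toQ x i := by
    rw [key]
    apply Finset.sum_nonneg
    intro j _
    exact mul_nonneg (hc j) (by exact_mod_cast hf j)
  have h2 : (0:ℚ) ≤ ((∑ i, f i * x i : ℤ) : ℚ) := by
    push_cast
    simpa [toQ] using h1
  exact_mod_cast h2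

lemma mem_dot6 (f0 f1 f2 f3 f4 f5 : ℤ)
    (hf : ∀ j : Fin 12, 0 ≤ f0 * vkGen j 0 + f1 * vkGen j 1 + f2 * vkGen j 2
      + f3 * vkGen j 3 + f4 * vkGen j 4 + f5 * vkGen j 5)
    (x : Fin 6 → ℤ) (hx : toQ x ∈ vkC) :
    0 ≤ f0 * x 0 + f1 * x 1 + f2 * x 2 + f3 * x 3 + f4 * x 4 + f5 * x 5 := by
  have h := mem_dot ![f0, f1, f2, f3, f4, f5]
    (fun j => by rw [Fin.sum_univ_six]; exact hf j) x hx
  rw [Fin.sum_univ_six] at h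
  exact h

private lemma vk_omega3 {x : ℤ} (h1 : -1 ≤ x) (h2 : x ≤ 1) : x = -1 ∨ x = 0 ∨ x = 1 := by omega
private lemma vk_omega4 {x : ℤ} (h1 : 0 ≤ x) (h2 : x ≤ 5) (h3 : x ≠ 1) (h4 : x ≠ 4) :
    x = 0 ∨ x = 2 ∨ x = 3 ∨ x = 5 := by omega
private lemma vk_two2 {a : ℤ} (h1 : -2 - 2 ≤ 2 * a) (h2 : 2 * a ≤ -2 + 1) : a = -1 ∨ a = -2 := by omega
private lemma vk_two3 {a : ℤ} (h1 : -3 - 2 ≤ 2 * a) (h2 : 2 * a ≤ -3 + 1) : a = -1 ∨ a = -2 := by omega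

set_option maxHeartbeats 4000000 in
private lemma vk_core (a0 a1 a2 a3 a4 a5 : ℤ)
    (hA0 : 0 ≤ (-1) * a0 + (-1) * a1 + (-1) * a2 + 0 * a3 + 0 * a4 + 0 * a5) (hB0 : (-1) * a0 + (-1) * a1 + (-1) * a2 + 0 * a3 + 0 * a4 + 0 * a5 ≤ 1)
    (hA1 : 0 ≤ (-1) * a0 + (-1) * a1 + 0 * a2 + (-1) * a3 + 0 * a4 + 0 * a5) (hB1 : (-1) * a0 + (-1) * a1 + 0 * a2 + (-1) * a3 + 0 * a4 + 0 * a5 ≤ 1)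
    (hA2 : 0 ≤ (-1) * a0 + (-1) * a1 + 0 * a2 + 0 * a3 + (-1) * a4 + 0 * a5) (hB2 : (-1) * a0 + (-1) * a1 + 0 * a2 + 0 * a3 + (-1) * a4 + 0 * a5 ≤ 1)
    (hA3 : 0 ≤ (-1) * a0 + (-1) * a1 + 0 * a2 + 0 * a3 + 0 * a4 + (-1) * a5) (hB3 : (-1) * a0 + (-1) * a1 + 0 * a2 + 0 * a3 + 0 * a4 + (-1) * a5 ≤ 1)
    (hA4 : 0 ≤ (-1) * a0 + 0 * a1 + (-1) * a2 + (-1) * a3 + 0 * a4 + 0 * a5) (hB4 : (-1) * a0 + 0 * a1 + (-1) * a2 + (-1) * a3 + 0 * a4 + 0 * a5 ≤ 1)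
    (hA5 : 0 ≤ (-1) * a0 + 0 * a1 + (-1) * a2 + 0 * a3 + (-1) * a4 + 0 * a5) (hB5 : (-1) * a0 + 0 * a1 + (-1) * a2 + 0 * a3 + (-1) * a4 + 0 * a5 ≤ 1)
    (hA6 : 0 ≤ (-1) * a0 + 0 * a1 + (-1) * a2 + 0 * a3 + 0 * a4 + (-1) * a5) (hB6 : (-1) * a0 + 0 * a1 + (-1) * a2 + 0 * a3 + 0 * a4 + (-1) * a5 ≤ 1)
    (hA7 : 0 ≤ (-1) * a0 + 0 * a1 + 0 * a2 + (-1) * a3 + (-1) * a4 + 0 * a5) (hB7 : (-1) * a0 + 0 * a1 + 0 * a2 + (-1) * a3 + (-1) * a4 + 0 * a5 ≤ 1)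
    (hA8 : 0 ≤ (-1) * a0 + 0 * a1 + 0 * a2 + (-1) * a3 + 0 * a4 + (-1) * a5) (hB8 : (-1) * a0 + 0 * a1 + 0 * a2 + (-1) * a3 + 0 * a4 + (-1) * a5 ≤ 1)
    (hA9 : 0 ≤ (-1) * a0 + 0 * a1 + 0 * a2 + 0 * a3 + (-1) * a4 + (-1) * a5) (hB9 : (-1) * a0 + 0 * a1 + 0 * a2 + 0 * a3 + (-1) * a4 + (-1) * a5 ≤ 1)
    (hA10 : 0 ≤ 2 * a0 + 0 * a1 + 0 * a2 + 1 * a3 + 1 * a4 + 1 * a5) (hB10 : 2 * a0 + 0 * a1 + 0 * a2 + 1 * a3 + 1 * a4 + 1 * a5 ≤ 1)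
    (hA11 : 0 ≤ 2 * a0 + 0 * a1 + 1 * a2 + 0 * a3 + 1 * a4 + 1 * a5) (hB11 : 2 * a0 + 0 * a1 + 1 * a2 + 0 * a3 + 1 * a4 + 1 * a5 ≤ 1)
    (hA12 : 0 ≤ 2 * a0 + 0 * a1 + 1 * a2 + 1 * a3 + 0 * a4 + 1 * a5) (hB12 : 2 * a0 + 0 * a1 + 1 * a2 + 1 * a3 + 0 * a4 + 1 * a5 ≤ 1)
    (hA13 : 0 ≤ 2 * a0 + 0 * a1 + 1 * a2 + 1 * a3 + 1 * a4 + 0 * a5) (hB13 : 2 * a0 + 0 * a1 + 1 * a2 + 1 * a3 + 1 * a4 + 0 * a5 ≤ 1)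
    (hA14 : 0 ≤ 2 * a0 + 1 * a1 + 0 * a2 + 0 * a3 + 1 * a4 + 1 * a5) (hB14 : 2 * a0 + 1 * a1 + 0 * a2 + 0 * a3 + 1 * a4 + 1 * a5 ≤ 1)
    (hA15 : 0 ≤ 2 * a0 + 1 * a1 + 0 * a2 + 1 * a3 + 0 * a4 + 1 * a5) (hB15 : 2 * a0 + 1 * a1 + 0 * a2 + 1 * a3 + 0 * a4 + 1 * a5 ≤ 1)
    (hA16 : 0 ≤ 2 * a0 + 1 * a1 + 0 * a2 + 1 * a3 + 1 * a4 + 0 * a5) (hB16 : 2 * a0 + 1 * a1 + 0 * a2 + 1 * a3 + 1 * a4 + 0 * a5 ≤ 1)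
    (hA17 : 0 ≤ 2 * a0 + 1 * a1 + 1 * a2 + 0 * a3 + 0 * a4 + 1 * a5) (hB17 : 2 * a0 + 1 * a1 + 1 * a2 + 0 * a3 + 0 * a4 + 1 * a5 ≤ 1)
    (hA18 : 0 ≤ 2 * a0 + 1 * a1 + 1 * a2 + 0 * a3 + 1 * a4 + 0 * a5) (hB18 : 2 * a0 + 1 * a1 + 1 * a2 + 0 * a3 + 1 * a4 + 0 * a5 ≤ 1)
    (hA19 : 0 ≤ 2 * a0 + 1 * a1 + 1 * a2 + 1 * a3 + 0 * a4 + 0 * a5) (hB19 : 2 * a0 + 1 * a1 + 1 * a2 + 1 * a3 + 0 * a4 + 0 * a5 ≤ 1)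
    (hne1 : ¬(a0 = 0 ∧ a1 = 0 ∧ a2 = 0 ∧ a3 = 0 ∧ a4 = 0 ∧ a5 = 0))
    (hne2 : ¬(a0 = 5 ∧ a1 = -3 ∧ a2 = -3 ∧ a3 = -3 ∧ a4 = -3 ∧ a5 = -3)) :
    (a0 = 2 ∧ a1 = (-1) ∧ a2 = (-1) ∧ a3 = (-1) ∧ a4 = (-1) ∧ a5 = (-1)) ∨
    (a0 = 2 ∧ a1 = (-2) ∧ a2 = (-1) ∧ a3 = (-1) ∧ a4 = (-1) ∧ a5 = (-1)) ∨
    (a0 = 2 ∧ a1 = (-1) ∧ a2 = (-2) ∧ a3 = (-1) ∧ a4 = (-1) ∧ a5 = (-1)) ∨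
    (a0 = 2 ∧ a1 = (-1) ∧ a2 = (-1) ∧ a3 = (-2) ∧ a4 = (-1) ∧ a5 = (-1)) ∨
    (a0 = 2 ∧ a1 = (-1) ∧ a2 = (-1) ∧ a3 = (-1) ∧ a4 = (-2) ∧ a5 = (-1)) ∨
    (a0 = 2 ∧ a1 = (-1) ∧ a2 = (-1) ∧ a3 = (-1) ∧ a4 = (-1) ∧ a5 = (-2)) ∨
    (a0 = 3 ∧ a1 = (-2) ∧ a2 = (-2) ∧ a3 = (-2) ∧ a4 = (-2) ∧ a5 = (-2)) ∨
    (a0 = 3 ∧ a1 = (-1) ∧ a2 = (-2) ∧ a3 = (-2) ∧ a4 = (-2) ∧ a5 = (-2)) ∨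
    (a0 = 3 ∧ a1 = (-2) ∧ a2 = (-1) ∧ a3 = (-2) ∧ a4 = (-2) ∧ a5 = (-2)) ∨
    (a0 = 3 ∧ a1 = (-2) ∧ a2 = (-2) ∧ a3 = (-1) ∧ a4 = (-2) ∧ a5 = (-2)) ∨
    (a0 = 3 ∧ a1 = (-2) ∧ a2 = (-2) ∧ a3 = (-2) ∧ a4 = (-1) ∧ a5 = (-2)) ∨
    (a0 = 3 ∧ a1 = (-2) ∧ a2 = (-2) ∧ a3 = (-2) ∧ a4 = (-2) ∧ a5 = (-1)) := by
  have t1 : 0 ≤ a0 := by omega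
  have t2 : a0 ≤ 5 := by omega
  have t3 : a0 ≠ 1 := by omega
  have t4 : a0 ≠ 4 := by omega
  have s1 : -1 ≤ 3 * a0 + a1 + a2 + a3 + a4 + a5 := by omega
  have s2 : 3 * a0 + a1 + a2 + a3 + a4 + a5 ≤ 1 := by omega
  have vL1 : -a0 - 2 ≤ 2 * a1 := by omega
  have vU1 : 2 * a1 ≤ -a0 + 1 := by omega
  have vL2 : -a0 - 2 ≤ 2 * a2 := by omega
  have vU2 : 2 * a2 ≤ -a0 + 1 := by omega
  have vL3 : -a0 - 2 ≤ 2 * a3 := by omega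
  have vU3 : 2 * a3 ≤ -a0 + 1 := by omega
  have vL4 : -a0 - 2 ≤ 2 * a4 := by omega
  have vU4 : 2 * a4 ≤ -a0 + 1 := by omega
  have vL5 : -a0 - 2 ≤ 2 * a5 := by omega
  have vU5 : 2 * a5 ≤ -a0 + 1 := by omega
  rcases vk_omega3 s1 s2 with hsg | hsg | hsg
  · have e0 : a0 = 3 := by omega
    subst e0
    have e1 : a1 = -2 := by omega
    subst e1
    have e2 : a2 = -2 := by omega
    subst e2
    have e3 : a3 = -2 := by omega
    subst e3
    have e4 : a4 = -2 := by omega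
    subst e4
    have e5 : a5 = -2 := by omega
    subst e5
    exact Or.inr (Or.inr (Or.inr (Or.inr (Or.inr (Or.inr (Or.inl ⟨rfl, rfl, rfl, rfl, rfl, rfl⟩))))))
  · clear hA10 hB10 hA11 hB11 hA12 hB12 hA13 hB13 hA14 hB14 hA15 hB15 hA16 hB16 hA17 hB17 hA18 hB18 hA19 hB19
    rcases vk_omega4 t1 t2 t3 t4 with e0 | e0 | e0 | e0 <;> subst e0
    · have e1 : a1 = 0 := by omega
      subst e1
      have e2 : a2 = 0 := by omega
      subst e2
      have e3 : a3 = 0 := by omega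
      subst e3
      have e4 : a4 = 0 := by omega
      subst e4
      have e5 : a5 = 0 := by omega
      subst e5
      exact absurd ⟨rfl, rfl, rfl, rfl, rfl, rfl⟩ hne1
    · -- a0 = 2
      rcases vk_two2 vL1 vU1 with f1 | f1
      · subst f1
        rcases vk_two2 vL2 vU2 with f2 | f2
        · subst f2
          rcases vk_two2 vL3 vU3 with f3 | f3
          · subst f3
            rcases vk_two2 vL4 vU4 with f4 | f4
            · subst f4
              have f5 : a5 = (-2) := by omega
              subst f5
              exact Or.inr (Or.inr (Or.inr (Or.inr (Or.inr (Or.inl ⟨rfl, rfl, rfl, rfl, rfl, rfl⟩)))))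
            · subst f4
              have f5 : a5 = (-1) := by omega
              subst f5
              exact Or.inr (Or.inr (Or.inr (Or.inr (Or.inl ⟨rfl, rfl, rfl, rfl, rfl, rfl⟩))))
          · subst f3
            have f4 : a4 = (-1) := by omega
            subst f4
            have f5 : a5 = (-1) := by omega
            subst f5
            exact Or.inr (Or.inr (Or.inr (Or.inl ⟨rfl, rfl, rfl, rfl, rfl, rfl⟩)))
        · subst f2
          have f3 : a3 = (-1) := by omega
          subst f3
          have f4 : a4 = (-1) := by omega
          subst f4
          have f5 : a5 = (-1) := by omega
          subst f5
          exact Or.inr (Or.inr (Or.inl ⟨rfl, rfl, rfl, rfl, rfl, rfl⟩))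
      · subst f1
        have f2 : a2 = (-1) := by omega
        subst f2
        have f3 : a3 = (-1) := by omega
        subst f3
        have f4 : a4 = (-1) := by omega
        subst f4
        have f5 : a5 = (-1) := by omega
        subst f5
        exact Or.inr (Or.inl ⟨rfl, rfl, rfl, rfl, rfl, rfl⟩)
    · -- a0 = 3
      rcases vk_two3 vL1 vU1 with f1 | f1
      · subst f1
        have f2 : a2 = (-2) := by omega
        subst f2
        have f3 : a3 = (-2) := by omega
        subst f3
        have f4 : a4 = (-2) := by omega
        subst f4
        have f5 : a5 = (-2) := by omega
        subst f5
        exact Or.inr (Or.inr (Or.inr (Or.inr (Or.inr (Or.inr (Or.inr (Or.inl ⟨rfl, rfl, rfl, rfl, rfl, rfl⟩)))))))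
      · subst f1
        rcases vk_two3 vL2 vU2 with f2 | f2
        · subst f2
          have f3 : a3 = (-2) := by omega
          subst f3
          have f4 : a4 = (-2) := by omega
          subst f4
          have f5 : a5 = (-2) := by omega
          subst f5
          exact Or.inr (Or.inr (Or.inr (Or.inr (Or.inr (Or.inr (Or.inr (Or.inr (Or.inl ⟨rfl, rfl, rfl, rfl, rfl, rfl⟩))))))))
        · subst f2
          rcases vk_two3 vL3 vU3 with f3 | f3
          · subst f3
            have f4 : a4 = (-2) := by omega
            subst f4
            have f5 : a5 = (-2) := by omega
            subst f5
            exact Or.inr (Or.inr (Or.inr (Or.inr (Or.inr (Or.inr (Or.inr (Or.inr (Or.inr (Or.inl ⟨rfl, rfl, rfl, rfl, rfl, rfl⟩)))))))))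
          · subst f3
            rcases vk_two3 vL4 vU4 with f4 | f4
            · subst f4
              have f5 : a5 = (-2) := by omega
              subst f5
              exact Or.inr (Or.inr (Or.inr (Or.inr (Or.inr (Or.inr (Or.inr (Or.inr (Or.inr (Or.inr (Or.inl ⟨rfl, rfl, rfl, rfl, rfl, rfl⟩))))))))))
            · subst f4
              have f5 : a5 = (-1) := by omega
              subst f5
              exact Or.inr (Or.inr (Or.inr (Or.inr (Or.inr (Or.inr (Or.inr (Or.inr (Or.inr (Or.inr (Or.inr (⟨rfl, rfl, rfl, rfl, rfl, rfl⟩)))))))))))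
    · have e1 : a1 = -3 := by omega
      subst e1
      have e2 : a2 = -3 := by omega
      subst e2
      have e3 : a3 = -3 := by omega
      subst e3
      have e4 : a4 = -3 := by omega
      subst e4
      have e5 : a5 = -3 := by omega
      subst e5
      exact absurd ⟨rfl, rfl, rfl, rfl, rfl, rfl⟩ hne2
  · have e0 : a0 = 2 := by omega
    subst e0
    have e1 : a1 = -1 := by omega
    subst e1
    have e2 : a2 = -1 := by omega
    subst e2
    have e3 : a3 = -1 := by omega
    subst e3
    have e4 : a4 = -1 := by omega
    subst e4
    have e5 : a5 = -1 := by omega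
    subst e5
    exact Or.inl ⟨rfl, rfl, rfl, rfl, rfl, rfl⟩

private lemma vk_eq6 (x : Fin 6 → ℤ) (c0 c1 c2 c3 c4 c5 : ℤ) (h0 : x 0 = c0)
    (h1 : x 1 = c1) (h2 : x 2 = c2) (h3 : x 3 = c3) (h4 : x 4 = c4) (h5 : x 5 = c5) :
    x = ![c0, c1, c2, c3, c4, c5] := by
  funext i; fin_cases i <;> assumption

private def vkPairs : Finset ((Fin 6 → ℤ) × (Fin 6 → ℤ)) :=
  {(vkG 0, vkH 0), (vkG 1, vkH 1), (vkG 2, vkH 2), (vkG 3, vkH 3), (vkG 4, vkH 4), (vkG 5, vkH 5), (vkH 0, vkG 0), (vkH 1, vkG 1), (vkH 2, vkG 2), (vkH 3, vkG 3), (vkH 4, vkG 4), (vkH 5, vkG 5)}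

set_option maxHeartbeats 4000000 in
/-- With the Voskresenskij–Klyachko data: the set of ordered
pairs `(x,y)` of nonzero lattice points `x, y ∈ C ∩ ℤ⁶` with `x + y = v` is
exactly `{(g_ℓ, h_ℓ) : ℓ = 0,…,5} ∪ {(h_ℓ, g_ℓ) : ℓ = 0,…,5}`, which has 12
elements; in particular there are exactly six ℤ-nef-partitions of `v` into two
unordered parts, and no `x ∈ ℤ⁶` satisfies `x + x = v`. -/
theorem vk_two_part_partitions :
    ({p : (Fin 6 → ℤ) × (Fin 6 → ℤ) |
        p.1 ≠ 0 ∧ p.2 ≠ 0 ∧ toQ p.1 ∈ vkC ∧ toQ p.2 ∈ vkC ∧ p.1 + p.2 = vkV}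
      = {p | ∃ ℓ : Fin 6, p = (vkG ℓ, vkH ℓ) ∨ p = (vkH ℓ, vkG ℓ)}) ∧
    ({p : (Fin 6 → ℤ) × (Fin 6 → ℤ) |
        ∃ ℓ : Fin 6, p = (vkG ℓ, vkH ℓ) ∨ p = (vkH ℓ, vkG ℓ)}).ncard = 12 ∧
    ∀ x : Fin 6 → ℤ, x + x ≠ vkV := by
  refine ⟨?_, ?_, ?_⟩
  · ext p
    simp only [Set.mem_setOf_eq]
    constructor
    · rintro ⟨hne1, hne2, hx, hy, hsum⟩
      have hyv : p.2 = vkV - p.1 := by rw [← hsum]; abel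
      have hs0 : p.1 0 + p.2 0 = 5 := congrFun hsum 0
      have hs1 : p.1 1 + p.2 1 = (-3) := congrFun hsum 1
      have hs2 : p.1 2 + p.2 2 = (-3) := congrFun hsum 2
      have hs3 : p.1 3 + p.2 3 = (-3) := congrFun hsum 3
      have hs4 : p.1 4 + p.2 4 = (-3) := congrFun hsum 4
      have hs5 : p.1 5 + p.2 5 = (-3) := congrFun hsum 5
      have hxA0 : 0 ≤ (-1) * p.1 0 + (-1) * p.1 1 + (-1) * p.1 2 + 0 * p.1 3 + 0 * p.1 4 + 0 * p.1 5 :=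
        mem_dot6 (-1) (-1) (-1) 0 0 0 (by decide) p.1 hx
      have hxB0 : (-1) * p.1 0 + (-1) * p.1 1 + (-1) * p.1 2 + 0 * p.1 3 + 0 * p.1 4 + 0 * p.1 5 ≤ 1 := by
        have h := mem_dot6 (-1) (-1) (-1) 0 0 0 (by decide) p.2 hy
        omega
      have hxA1 : 0 ≤ (-1) * p.1 0 + (-1) * p.1 1 + 0 * p.1 2 + (-1) * p.1 3 + 0 * p.1 4 + 0 * p.1 5 :=
        mem_dot6 (-1) (-1) 0 (-1) 0 0 (by decide) p.1 hx
      have hxB1 : (-1) * p.1 0 + (-1) * p.1 1 + 0 * p.1 2 + (-1) * p.1 3 + 0 * p.1 4 + 0 * p.1 5 ≤ 1 := by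
        have h := mem_dot6 (-1) (-1) 0 (-1) 0 0 (by decide) p.2 hy
        omega
      have hxA2 : 0 ≤ (-1) * p.1 0 + (-1) * p.1 1 + 0 * p.1 2 + 0 * p.1 3 + (-1) * p.1 4 + 0 * p.1 5 :=
        mem_dot6 (-1) (-1) 0 0 (-1) 0 (by decide) p.1 hx
      have hxB2 : (-1) * p.1 0 + (-1) * p.1 1 + 0 * p.1 2 + 0 * p.1 3 + (-1) * p.1 4 + 0 * p.1 5 ≤ 1 := by
        have h := mem_dot6 (-1) (-1) 0 0 (-1) 0 (by decide) p.2 hy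
        omega
      have hxA3 : 0 ≤ (-1) * p.1 0 + (-1) * p.1 1 + 0 * p.1 2 + 0 * p.1 3 + 0 * p.1 4 + (-1) * p.1 5 :=
        mem_dot6 (-1) (-1) 0 0 0 (-1) (by decide) p.1 hx
      have hxB3 : (-1) * p.1 0 + (-1) * p.1 1 + 0 * p.1 2 + 0 * p.1 3 + 0 * p.1 4 + (-1) * p.1 5 ≤ 1 := by
        have h := mem_dot6 (-1) (-1) 0 0 0 (-1) (by decide) p.2 hy
        omega
      have hxA4 : 0 ≤ (-1) * p.1 0 + 0 * p.1 1 + (-1) * p.1 2 + (-1) * p.1 3 + 0 * p.1 4 + 0 * p.1 5 :=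
        mem_dot6 (-1) 0 (-1) (-1) 0 0 (by decide) p.1 hx
      have hxB4 : (-1) * p.1 0 + 0 * p.1 1 + (-1) * p.1 2 + (-1) * p.1 3 + 0 * p.1 4 + 0 * p.1 5 ≤ 1 := by
        have h := mem_dot6 (-1) 0 (-1) (-1) 0 0 (by decide) p.2 hy
        omega
      have hxA5 : 0 ≤ (-1) * p.1 0 + 0 * p.1 1 + (-1) * p.1 2 + 0 * p.1 3 + (-1) * p.1 4 + 0 * p.1 5 :=
        mem_dot6 (-1) 0 (-1) 0 (-1) 0 (by decide) p.1 hx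
      have hxB5 : (-1) * p.1 0 + 0 * p.1 1 + (-1) * p.1 2 + 0 * p.1 3 + (-1) * p.1 4 + 0 * p.1 5 ≤ 1 := by
        have h := mem_dot6 (-1) 0 (-1) 0 (-1) 0 (by decide) p.2 hy
        omega
      have hxA6 : 0 ≤ (-1) * p.1 0 + 0 * p.1 1 + (-1) * p.1 2 + 0 * p.1 3 + 0 * p.1 4 + (-1) * p.1 5 :=
        mem_dot6 (-1) 0 (-1) 0 0 (-1) (by decide) p.1 hx
      have hxB6 : (-1) * p.1 0 + 0 * p.1 1 + (-1) * p.1 2 + 0 * p.1 3 + 0 * p.1 4 + (-1) * p.1 5 ≤ 1 := by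
        have h := mem_dot6 (-1) 0 (-1) 0 0 (-1) (by decide) p.2 hy
        omega
      have hxA7 : 0 ≤ (-1) * p.1 0 + 0 * p.1 1 + 0 * p.1 2 + (-1) * p.1 3 + (-1) * p.1 4 + 0 * p.1 5 :=
        mem_dot6 (-1) 0 0 (-1) (-1) 0 (by decide) p.1 hx
      have hxB7 : (-1) * p.1 0 + 0 * p.1 1 + 0 * p.1 2 + (-1) * p.1 3 + (-1) * p.1 4 + 0 * p.1 5 ≤ 1 := by
        have h := mem_dot6 (-1) 0 0 (-1) (-1) 0 (by decide) p.2 hy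
        omega
      have hxA8 : 0 ≤ (-1) * p.1 0 + 0 * p.1 1 + 0 * p.1 2 + (-1) * p.1 3 + 0 * p.1 4 + (-1) * p.1 5 :=
        mem_dot6 (-1) 0 0 (-1) 0 (-1) (by decide) p.1 hx
      have hxB8 : (-1) * p.1 0 + 0 * p.1 1 + 0 * p.1 2 + (-1) * p.1 3 + 0 * p.1 4 + (-1) * p.1 5 ≤ 1 := by
        have h := mem_dot6 (-1) 0 0 (-1) 0 (-1) (by decide) p.2 hy
        omega
      have hxA9 : 0 ≤ (-1) * p.1 0 + 0 * p.1 1 + 0 * p.1 2 + 0 * p.1 3 + (-1) * p.1 4 + (-1) * p.1 5 :=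
        mem_dot6 (-1) 0 0 0 (-1) (-1) (by decide) p.1 hx
      have hxB9 : (-1) * p.1 0 + 0 * p.1 1 + 0 * p.1 2 + 0 * p.1 3 + (-1) * p.1 4 + (-1) * p.1 5 ≤ 1 := by
        have h := mem_dot6 (-1) 0 0 0 (-1) (-1) (by decide) p.2 hy
        omega
      have hxA10 : 0 ≤ 2 * p.1 0 + 0 * p.1 1 + 0 * p.1 2 + 1 * p.1 3 + 1 * p.1 4 + 1 * p.1 5 :=
        mem_dot6 2 0 0 1 1 1 (by decide) p.1 hx
      have hxB10 : 2 * p.1 0 + 0 * p.1 1 + 0 * p.1 2 + 1 * p.1 3 + 1 * p.1 4 + 1 * p.1 5 ≤ 1 := by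
        have h := mem_dot6 2 0 0 1 1 1 (by decide) p.2 hy
        omega
      have hxA11 : 0 ≤ 2 * p.1 0 + 0 * p.1 1 + 1 * p.1 2 + 0 * p.1 3 + 1 * p.1 4 + 1 * p.1 5 :=
        mem_dot6 2 0 1 0 1 1 (by decide) p.1 hx
      have hxB11 : 2 * p.1 0 + 0 * p.1 1 + 1 * p.1 2 + 0 * p.1 3 + 1 * p.1 4 + 1 * p.1 5 ≤ 1 := by
        have h := mem_dot6 2 0 1 0 1 1 (by decide) p.2 hy
        omega
      have hxA12 : 0 ≤ 2 * p.1 0 + 0 * p.1 1 + 1 * p.1 2 + 1 * p.1 3 + 0 * p.1 4 + 1 * p.1 5 :=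
        mem_dot6 2 0 1 1 0 1 (by decide) p.1 hx
      have hxB12 : 2 * p.1 0 + 0 * p.1 1 + 1 * p.1 2 + 1 * p.1 3 + 0 * p.1 4 + 1 * p.1 5 ≤ 1 := by
        have h := mem_dot6 2 0 1 1 0 1 (by decide) p.2 hy
        omega
      have hxA13 : 0 ≤ 2 * p.1 0 + 0 * p.1 1 + 1 * p.1 2 + 1 * p.1 3 + 1 * p.1 4 + 0 * p.1 5 :=
        mem_dot6 2 0 1 1 1 0 (by decide) p.1 hx
      have hxB13 : 2 * p.1 0 + 0 * p.1 1 + 1 * p.1 2 + 1 * p.1 3 + 1 * p.1 4 + 0 * p.1 5 ≤ 1 := by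
        have h := mem_dot6 2 0 1 1 1 0 (by decide) p.2 hy
        omega
      have hxA14 : 0 ≤ 2 * p.1 0 + 1 * p.1 1 + 0 * p.1 2 + 0 * p.1 3 + 1 * p.1 4 + 1 * p.1 5 :=
        mem_dot6 2 1 0 0 1 1 (by decide) p.1 hx
      have hxB14 : 2 * p.1 0 + 1 * p.1 1 + 0 * p.1 2 + 0 * p.1 3 + 1 * p.1 4 + 1 * p.1 5 ≤ 1 := by
        have h := mem_dot6 2 1 0 0 1 1 (by decide) p.2 hy
        omega
      have hxA15 : 0 ≤ 2 * p.1 0 + 1 * p.1 1 + 0 * p.1 2 + 1 * p.1 3 + 0 * p.1 4 + 1 * p.1 5 :=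
        mem_dot6 2 1 0 1 0 1 (by decide) p.1 hx
      have hxB15 : 2 * p.1 0 + 1 * p.1 1 + 0 * p.1 2 + 1 * p.1 3 + 0 * p.1 4 + 1 * p.1 5 ≤ 1 := by
        have h := mem_dot6 2 1 0 1 0 1 (by decide) p.2 hy
        omega
      have hxA16 : 0 ≤ 2 * p.1 0 + 1 * p.1 1 + 0 * p.1 2 + 1 * p.1 3 + 1 * p.1 4 + 0 * p.1 5 :=
        mem_dot6 2 1 0 1 1 0 (by decide) p.1 hx
      have hxB16 : 2 * p.1 0 + 1 * p.1 1 + 0 * p.1 2 + 1 * p.1 3 + 1 * p.1 4 + 0 * p.1 5 ≤ 1 := by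
        have h := mem_dot6 2 1 0 1 1 0 (by decide) p.2 hy
        omega
      have hxA17 : 0 ≤ 2 * p.1 0 + 1 * p.1 1 + 1 * p.1 2 + 0 * p.1 3 + 0 * p.1 4 + 1 * p.1 5 :=
        mem_dot6 2 1 1 0 0 1 (by decide) p.1 hx
      have hxB17 : 2 * p.1 0 + 1 * p.1 1 + 1 * p.1 2 + 0 * p.1 3 + 0 * p.1 4 + 1 * p.1 5 ≤ 1 := by
        have h := mem_dot6 2 1 1 0 0 1 (by decide) p.2 hy
        omega
      have hxA18 : 0 ≤ 2 * p.1 0 + 1 * p.1 1 + 1 * p.1 2 + 0 * p.1 3 + 1 * p.1 4 + 0 * p.1 5 :=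
        mem_dot6 2 1 1 0 1 0 (by decide) p.1 hx
      have hxB18 : 2 * p.1 0 + 1 * p.1 1 + 1 * p.1 2 + 0 * p.1 3 + 1 * p.1 4 + 0 * p.1 5 ≤ 1 := by
        have h := mem_dot6 2 1 1 0 1 0 (by decide) p.2 hy
        omega
      have hxA19 : 0 ≤ 2 * p.1 0 + 1 * p.1 1 + 1 * p.1 2 + 1 * p.1 3 + 0 * p.1 4 + 0 * p.1 5 :=
        mem_dot6 2 1 1 1 0 0 (by decide) p.1 hx
      have hxB19 : 2 * p.1 0 + 1 * p.1 1 + 1 * p.1 2 + 1 * p.1 3 + 0 * p.1 4 + 0 * p.1 5 ≤ 1 := by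
        have h := mem_dot6 2 1 1 1 0 0 (by decide) p.2 hy
        omega
      have hne1' : ¬(p.1 0 = 0 ∧ p.1 1 = 0 ∧ p.1 2 = 0 ∧ p.1 3 = 0 ∧ p.1 4 = 0 ∧ p.1 5 = 0) := by
        rintro ⟨e0, e1, e2, e3, e4, e5⟩
        exact hne1 ((vk_eq6 p.1 _ _ _ _ _ _ e0 e1 e2 e3 e4 e5).trans (by decide))
      have hne2' : ¬(p.1 0 = 5 ∧ p.1 1 = -3 ∧ p.1 2 = -3 ∧ p.1 3 = -3 ∧ p.1 4 = -3 ∧ p.1 5 = -3) := by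
        rintro ⟨e0, e1, e2, e3, e4, e5⟩
        apply hne2
        rw [hyv, vk_eq6 p.1 _ _ _ _ _ _ e0 e1 e2 e3 e4 e5]
        decide
      rcases vk_core (p.1 0) (p.1 1) (p.1 2) (p.1 3) (p.1 4) (p.1 5) hxA0 hxB0 hxA1 hxB1 hxA2 hxB2 hxA3 hxB3 hxA4 hxB4 hxA5 hxB5 hxA6 hxB6 hxA7 hxB7 hxA8 hxB8 hxA9 hxB9 hxA10 hxB10 hxA11 hxB11 hxA12 hxB12 hxA13 hxB13 hxA14 hxB14 hxA15 hxB15 hxA16 hxB16 hxA17 hxB17 hxA18 hxB18 hxA19 hxB19 hne1' hne2' with h | h | h | h | h | h | h | h | h | h | h | h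
      · obtain ⟨e0, e1, e2, e3, e4, e5⟩ := h
        have h1 : p.1 = vkG 0 := (vk_eq6 p.1 _ _ _ _ _ _ e0 e1 e2 e3 e4 e5).trans (by decide)
        have h2 : p.2 = vkH 0 := by rw [hyv, h1]; decide
        exact ⟨0, Or.inl (Prod.ext h1 h2)⟩
      · obtain ⟨e0, e1, e2, e3, e4, e5⟩ := h
        have h1 : p.1 = vkG 1 := (vk_eq6 p.1 _ _ _ _ _ _ e0 e1 e2 e3 e4 e5).trans (by decide)
        have h2 : p.2 = vkH 1 := by rw [hyv, h1]; decide
        exact ⟨1, Or.inl (Prod.ext h1 h2)⟩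
      · obtain ⟨e0, e1, e2, e3, e4, e5⟩ := h
        have h1 : p.1 = vkG 2 := (vk_eq6 p.1 _ _ _ _ _ _ e0 e1 e2 e3 e4 e5).trans (by decide)
        have h2 : p.2 = vkH 2 := by rw [hyv, h1]; decide
        exact ⟨2, Or.inl (Prod.ext h1 h2)⟩
      · obtain ⟨e0, e1, e2, e3, e4, e5⟩ := h
        have h1 : p.1 = vkG 3 := (vk_eq6 p.1 _ _ _ _ _ _ e0 e1 e2 e3 e4 e5).trans (by decide)
        have h2 : p.2 = vkH 3 := by rw [hyv, h1]; decide
        exact ⟨3, Or.inl (Prod.ext h1 h2)⟩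
      · obtain ⟨e0, e1, e2, e3, e4, e5⟩ := h
        have h1 : p.1 = vkG 4 := (vk_eq6 p.1 _ _ _ _ _ _ e0 e1 e2 e3 e4 e5).trans (by decide)
        have h2 : p.2 = vkH 4 := by rw [hyv, h1]; decide
        exact ⟨4, Or.inl (Prod.ext h1 h2)⟩
      · obtain ⟨e0, e1, e2, e3, e4, e5⟩ := h
        have h1 : p.1 = vkG 5 := (vk_eq6 p.1 _ _ _ _ _ _ e0 e1 e2 e3 e4 e5).trans (by decide)
        have h2 : p.2 = vkH 5 := by rw [hyv, h1]; decide
        exact ⟨5, Or.inl (Prod.ext h1 h2)⟩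
      · obtain ⟨e0, e1, e2, e3, e4, e5⟩ := h
        have h1 : p.1 = vkH 0 := (vk_eq6 p.1 _ _ _ _ _ _ e0 e1 e2 e3 e4 e5).trans (by decide)
        have h2 : p.2 = vkG 0 := by rw [hyv, h1]; decide
        exact ⟨0, Or.inr (Prod.ext h1 h2)⟩
      · obtain ⟨e0, e1, e2, e3, e4, e5⟩ := h
        have h1 : p.1 = vkH 1 := (vk_eq6 p.1 _ _ _ _ _ _ e0 e1 e2 e3 e4 e5).trans (by decide)
        have h2 : p.2 = vkG 1 := by rw [hyv, h1]; decide
        exact ⟨1, Or.inr (Prod.ext h1 h2)⟩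
      · obtain ⟨e0, e1, e2, e3, e4, e5⟩ := h
        have h1 : p.1 = vkH 2 := (vk_eq6 p.1 _ _ _ _ _ _ e0 e1 e2 e3 e4 e5).trans (by decide)
        have h2 : p.2 = vkG 2 := by rw [hyv, h1]; decide
        exact ⟨2, Or.inr (Prod.ext h1 h2)⟩
      · obtain ⟨e0, e1, e2, e3, e4, e5⟩ := h
        have h1 : p.1 = vkH 3 := (vk_eq6 p.1 _ _ _ _ _ _ e0 e1 e2 e3 e4 e5).trans (by decide)
        have h2 : p.2 = vkG 3 := by rw [hyv, h1]; decide
        exact ⟨3, Or.inr (Prod.ext h1 h2)⟩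
      · obtain ⟨e0, e1, e2, e3, e4, e5⟩ := h
        have h1 : p.1 = vkH 4 := (vk_eq6 p.1 _ _ _ _ _ _ e0 e1 e2 e3 e4 e5).trans (by decide)
        have h2 : p.2 = vkG 4 := by rw [hyv, h1]; decide
        exact ⟨4, Or.inr (Prod.ext h1 h2)⟩
      · obtain ⟨e0, e1, e2, e3, e4, e5⟩ := h
        have h1 : p.1 = vkH 5 := (vk_eq6 p.1 _ _ _ _ _ _ e0 e1 e2 e3 e4 e5).trans (by decide)
        have h2 : p.2 = vkG 5 := by rw [hyv, h1]; decide
        exact ⟨5, Or.inr (Prod.ext h1 h2)⟩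
    · rintro ⟨ℓ, h | h⟩ <;> subst h
      · refine ⟨?_, ?_, ?_, ?_, ?_⟩
        · fin_cases ℓ <;> decide
        · fin_cases ℓ <;> decide
        · show toQ (vkG ℓ) ∈ vkC
          have key : vkGen (Fin.castAdd 6 ℓ) = vkG ℓ := Fin.append_left vkG vkH ℓ
          rw [← key]; exact gen_mem _
        · show toQ (vkH ℓ) ∈ vkC
          have key : vkGen (Fin.natAdd 6 ℓ) = vkH ℓ := Fin.append_right vkG vkH ℓ
          rw [← key]; exact gen_mem _
        · fin_cases ℓ <;> decide
      · refine ⟨?_, ?_, ?_, ?_, ?_⟩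
        · fin_cases ℓ <;> decide
        · fin_cases ℓ <;> decide
        · show toQ (vkH ℓ) ∈ vkC
          have key : vkGen (Fin.natAdd 6 ℓ) = vkH ℓ := Fin.append_right vkG vkH ℓ
          rw [← key]; exact gen_mem _
        · show toQ (vkG ℓ) ∈ vkC
          have key : vkGen (Fin.castAdd 6 ℓ) = vkG ℓ := Fin.append_left vkG vkH ℓ
          rw [← key]; exact gen_mem _
        · fin_cases ℓ <;> decide
  · have hset : {p : (Fin 6 → ℤ) × (Fin 6 → ℤ) |
        ∃ ℓ : Fin 6, p = (vkG ℓ, vkH ℓ) ∨ p = (vkH ℓ, vkG ℓ)} = ↑vkPairs := by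
      ext p
      simp only [Set.mem_setOf_eq, vkPairs, Finset.coe_insert, Set.mem_insert_iff,
        Finset.coe_singleton, Set.mem_singleton_iff]
      constructor
      · rintro ⟨ℓ, h | h⟩ <;> subst h <;> fin_cases ℓ
        exacts [Or.inl rfl, Or.inr (Or.inl rfl), Or.inr (Or.inr (Or.inl rfl)), Or.inr (Or.inr (Or.inr (Or.inl rfl))), Or.inr (Or.inr (Or.inr (Or.inr (Or.inl rfl)))), Or.inr (Or.inr (Or.inr (Or.inr (Or.inr (Or.inl rfl))))), Or.inr (Or.inr (Or.inr (Or.inr (Or.inr (Or.inr (Or.inl rfl)))))), Or.inr (Or.inr (Or.inr (Or.inr (Or.inr (Or.inr (Or.inr (Or.inl rfl))))))), Or.inr (Or.inr (Or.inr (Or.inr (Or.inr (Or.inr (Or.inr (Or.inr (Or.inl rfl)))))))), Or.inr (Or.inr (Or.inr (Or.inr (Or.inr (Or.inr (Or.inr (Or.inr (Or.inr (Or.inl rfl))))))))), Or.inr (Or.inr (Or.inr (Or.inr (Or.inr (Or.inr (Or.inr (Or.inr (Or.inr (Or.inr (Or.inl rfl)))))))))), Or.inr (Or.inr (Or.inr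 (Or.inr (Or.inr (Or.inr (Or.inr (Or.inr (Or.inr (Or.inr (Or.inr (rfl)))))))))))]
      · rintro (h | h | h | h | h | h | h | h | h | h | h | h)
        exacts [⟨0, Or.inl h⟩, ⟨1, Or.inl h⟩, ⟨2, Or.inl h⟩, ⟨3, Or.inl h⟩, ⟨4, Or.inl h⟩, ⟨5, Or.inl h⟩, ⟨0, Or.inr h⟩, ⟨1, Or.inr h⟩, ⟨2, Or.inr h⟩, ⟨3, Or.inr h⟩, ⟨4, Or.inr h⟩, ⟨5, Or.inr h⟩]
    rw [hset, Set.ncard_coe_finset]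
    decide
  · intro x h
    have h0 : x 0 + x 0 = 5 := congrFun h 0
    omega
end
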